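/- arXiv:2211.04424 — 7 statements merged into one kernel-verified Lean document; each statement's English description precedes it below -/
import Mathlib

section
/- Let X and Y be first countable topological spaces, let y ∈ Y, and let f : X → Y be any map. Then the following conditions are equivalent: (i) for every x ∈ f⁻¹(y) and every neighborhood U of x in X, the image f(U) is a neighborhood of y in Y; (ii) for every sequence (y_n)_{n∈ℕ} in Y converging to y, one has f⁻¹(y) ⊆ limsup_{n→∞} f⁻¹(y_n). -/
open Filter Topology

/-- The upper limit of a sequence of subsets `A n` of a topological space:
the set of points `x` for which there exist a strictly increasing sequence of natural
numbers `n₁ < n₂ < ⋯` and points `x_k ∈ A (n_k)` such that `(x_k)` converges to `x`. -/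
def seqLimsup {X : Type*} [TopologicalSpace X] (A : ℕ → Set X) : Set X :=
  {x | ∃ φ : ℕ → ℕ, StrictMono φ ∧
    ∃ f : ℕ → X, (∀ k, f k ∈ A (φ k)) ∧ Filter.Tendsto f Filter.atTop (nhds x)}

/-- For first countable spaces `X`, `Y`, a point `y ∈ Y` and any map `f : X → Y`,
the following are equivalent:
(i) for every `x ∈ f⁻¹(y)` and every neighbourhood `U` of `x`, the image `f(U)` is a
neighbourhood of `y`;
(ii) for every sequence `(y_n)` in `Y` converging to `y`, one has
`f⁻¹(y) ⊆ limsup_n f⁻¹(y_n)`. -/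
theorem locally_open_iff_limsup {X Y : Type*} [TopologicalSpace X] [TopologicalSpace Y]
    [FirstCountableTopology X] [FirstCountableTopology Y] (y : Y) (f : X → Y) :
    (∀ x ∈ f ⁻¹' {y}, ∀ U ∈ 𝓝 x, f '' U ∈ 𝓝 y) ↔
      (∀ yseq : ℕ → Y, Tendsto yseq atTop (𝓝 y) →
        f ⁻¹' {y} ⊆ seqLimsup (fun n => f ⁻¹' {yseq n})) := by
  constructor
  · intro h yseq hy x hx
    obtain ⟨U, hU⟩ := (𝓝 x).exists_antitone_basis
    have hev : ∀ k : ℕ, ∀ᶠ n in atTop, yseq n ∈ f '' U k := fun k =>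
      hy.eventually_mem (h x hx (U k) (hU.mem k))
    obtain ⟨φ, hφ, hmem⟩ := Filter.extraction_forall_of_eventually hev
    choose xk hxk hfxk using hmem
    refine ⟨φ, hφ, xk, fun k => by simp [hfxk k], ?_⟩
    exact hU.tendsto hxk
  · intro h
    by_contra hc
    push_neg at hc
    obtain ⟨x, hx, U, hU, hnU⟩ := hc
    obtain ⟨V, hV⟩ := (𝓝 y).exists_antitone_basis
    have : ∀ n : ℕ, ∃ z, z ∈ V n ∧ z ∉ f '' U := by
      intro n
      by_contra hn
      push_neg at hn
      exact hnU (mem_of_superset (hV.mem n) hn)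
    choose yseq hyV hyU using this
    have hys : Tendsto yseq atTop (𝓝 y) := hV.tendsto hyV
    obtain ⟨φ, hφ, xk, hxkmem, hxktend⟩ := h yseq hys hx
    have : ∀ᶠ k in atTop, xk k ∈ U := hxktend.eventually_mem hU
    obtain ⟨k, hk⟩ := this.exists
    exact hyU (φ k) ⟨xk k, hk, hxkmem k⟩
end

section
/- Let Y be a first countable topological space with a finite increasing family of open subsets ∅ = D_0 ⊆ D_1 ⊆ ⋯ ⊆ D_m = Y, and set Γ_j := D_j \ D_{j−1} for j = 1, …, m. Then a subset F ⊆ Y is closed if and only if: (a) F ∩ Γ_j is closed in the subspace topology of Γ_j for every j = 1, …, m; and (b) for all 1 ≤ j₁ < j₂ ≤ m, every point y ∈ Γ_{j₂} lying in the closure of F ∩ Γ_{j₁} belongs to F. -/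
/-- Let `Y` be a first countable topological space with an increasing family of open subsets
`∅ = D 0 ⊆ D 1 ⊆ ⋯ ⊆ D m = Y`, and let `Γ j := D j \ D (j-1)` for `j = 1, …, m`.
A subset `F ⊆ Y` is closed if and only if
(a) `F ∩ Γ j` is closed in the subspace topology of `Γ j` for every `j = 1, …, m`, and
(b) for all `1 ≤ j₁ < j₂ ≤ m`, every point of `Γ j₂` lying in the closure of `F ∩ Γ j₁`
belongs to `F`. -/
theorem isClosed_iff_of_open_filtration {Y : Type*} [TopologicalSpace Y]
    [FirstCountableTopology Y] (m : ℕ) (D : ℕ → Set Y)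
    (hD0 : D 0 = ∅) (hDm : D m = Set.univ)
    (hmono : ∀ j < m, D j ⊆ D (j + 1)) (hopen : ∀ j ≤ m, IsOpen (D j))
    (F : Set Y) :
    IsClosed F ↔
      ((∀ j, 1 ≤ j → j ≤ m →
          IsClosed {x : ↥(D j \ D (j - 1)) | (x : Y) ∈ F}) ∧
        (∀ j₁ j₂, 1 ≤ j₁ → j₁ < j₂ → j₂ ≤ m →
          ∀ y ∈ D j₂ \ D (j₂ - 1), y ∈ closure (F ∩ (D j₁ \ D (j₁ - 1))) → y ∈ F)) := by
  -- extended monotonicity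
  have hmono' : ∀ i j, i ≤ j → j ≤ m → D i ⊆ D j := by
    intro i j hij hjm
    induction j with
    | zero => simp [Nat.le_zero.mp hij]
    | succ k ih =>
      rcases Nat.lt_or_ge i (k + 1) with h | h
      · exact (ih (Nat.lt_succ_iff.mp h) (le_trans (Nat.le_succ k) hjm)).trans
          (hmono k (Nat.lt_of_succ_le hjm))
      · have : i = k + 1 := le_antisymm hij h
        simp [this]
  -- every point lies in some Γ j
  have hpart : ∀ y : Y, ∃ j, 1 ≤ j ∧ j ≤ m ∧ y ∈ D j \ D (j - 1) := by
    intro y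
    have hex : ∃ j, y ∈ D j := ⟨m, by simp [hDm]⟩
    classical
    set j := Nat.find hex with hj
    have hyj : y ∈ D j := Nat.find_spec hex
    have hj1 : 1 ≤ j := by
      rcases Nat.eq_zero_or_pos j with h | h
      · exfalso; rw [h] at hyj; rw [hD0] at hyj; exact hyj
      · exact h
    have hjm : j ≤ m := Nat.find_le (by simp [hDm])
    refine ⟨j, hj1, hjm, hyj, ?_⟩
    exact Nat.find_min hex (Nat.sub_lt hj1 one_pos)
  constructor
  · intro hF
    refine ⟨fun j _ _ => hF.preimage continuous_subtype_val,
      fun j₁ j₂ _ _ _ y _ hy => ?_⟩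
    have := closure_mono (Set.inter_subset_left) hy
    rwa [hF.closure_eq] at this
  · rintro ⟨ha, hb⟩
    rw [← isOpen_compl_iff, isOpen_iff_forall_mem_open]
    have hFU : F = ⋃ j ∈ Finset.Icc 1 m, (F ∩ (D j \ D (j - 1))) := by
      ext y
      simp only [Set.mem_iUnion, Finset.mem_Icc]
      constructor
      · intro hy
        obtain ⟨j, h1, h2, h3⟩ := hpart y
        exact ⟨j, ⟨h1, h2⟩, hy, h3⟩
      · rintro ⟨j, _, hy, _⟩; exact hy
    have hclosure : closure F ⊆ F := by
      intro y hy
      rw [hFU, Finset.closure_biUnion] at hy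
      simp only [Set.mem_iUnion, Finset.mem_Icc] at hy
      obtain ⟨j₁, ⟨hj11, hj1m⟩, hy1⟩ := hy
      obtain ⟨j₂, hj21, hj2m, hyΓ⟩ := hpart y
      rcases lt_trichotomy j₁ j₂ with h | h | h
      · exact hb j₁ j₂ hj11 h hj2m y hyΓ hy1
      · subst h
        have hc := ha j₁ hj11 hj1m
        rw [isClosed_induced_iff] at hc
        obtain ⟨C, hC, hCe⟩ := hc
        have hsub : F ∩ (D j₁ \ D (j₁ - 1)) ⊆ C := by
          intro x hx
          have : (⟨x, hx.2⟩ : ↥(D j₁ \ D (j₁ - 1))) ∈ {x : ↥(D j₁ \ D (j₁ - 1)) | (x : Y) ∈ F} :=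
            hx.1
          rw [← hCe] at this
          exact this
        have hyC : y ∈ C := hC.closure_eq ▸ closure_mono hsub hy1
        have : (⟨y, hyΓ⟩ : ↥(D j₁ \ D (j₁ - 1))) ∈ Subtype.val ⁻¹' C := hyC
        rw [hCe] at this
        exact this
      · -- j₂ < j₁ : contradiction via open set D (j₁ - 1)
        exfalso
        have hyD : y ∈ D (j₁ - 1) :=
          hmono' j₂ (j₁ - 1) (Nat.le_sub_one_of_lt h)
            (Nat.sub_le_of_le_add (le_trans hj1m (Nat.le_add_right m 1))) hyΓ.1
        have hopen' : IsOpen (D (j₁ - 1)) := hopen _ (le_trans (Nat.sub_le j₁ 1) hj1m)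
        rw [mem_closure_iff] at hy1
        obtain ⟨x, hxD, hxF, hxΓ⟩ := hy1 _ hopen' hyD
        exact hxΓ.2 hxD
    intro y hy
    refine ⟨(closure F)ᶜ, fun x hx => fun hxF => hx (subset_closure hxF), ?_, ?_⟩
    · exact isClosed_closure.isOpen_compl
    · exact fun h => hy (hclosure h)
end

section
/- The quotient map q : ℂ² × ℝ → Q_θ is an open map. -/
open Filter Topology

/-- The equivalence relation `∼` on `ℂ² × ℝ`: `((z₁,z₂),τ) ∼ ((w₁,w₂),σ)` iff
`|z₁| = |w₁|`, `|z₂| = |w₂|`, and moreover `τ - σ ∈ ℤ` when `z₁ ≠ 0 = z₂`,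
`τ - σ ∈ θℤ` when `z₁ = 0 ≠ z₂`, and `τ = σ` when `z₁ = z₂ = 0`. -/
def mrel (θ : ℝ) (p q : (ℂ × ℂ) × ℝ) : Prop :=
  ‖p.1.1‖ = ‖q.1.1‖ ∧
  ‖p.1.2‖ = ‖q.1.2‖ ∧
  (p.1.1 ≠ 0 ∧ p.1.2 = 0 → ∃ k : ℤ, p.2 - q.2 = (k : ℝ)) ∧
  (p.1.1 = 0 ∧ p.1.2 ≠ 0 → ∃ k : ℤ, p.2 - q.2 = θ * (k : ℝ)) ∧
  (p.1.1 = 0 ∧ p.1.2 = 0 → p.2 = q.2)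

theorem mrel_equivalence (θ : ℝ) : Equivalence (mrel θ) := by
  constructor
  · exact fun p => ⟨rfl, rfl, fun _ => ⟨0, by simp⟩, fun _ => ⟨0, by simp⟩, fun _ => rfl⟩
  · rintro p q ⟨h1, h2, h3, h4, h5⟩
    have key : ∀ a b : ℂ, ‖a‖ = ‖b‖ → (a = 0 ↔ b = 0) := by
      intro a b h
      rw [← norm_eq_zero, h, norm_eq_zero]
    have e1 : p.1.1 = 0 ↔ q.1.1 = 0 := key _ _ h1
    have e2 : p.1.2 = 0 ↔ q.1.2 = 0 := key _ _ h2
    refine ⟨h1.symm, h2.symm, ?_, ?_, ?_⟩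
    · rintro ⟨hq1, hq2⟩
      obtain ⟨k, hk⟩ := h3 ⟨fun h => hq1 (e1.mp h), e2.mpr hq2⟩
      exact ⟨-k, by push_cast; linarith⟩
    · rintro ⟨hq1, hq2⟩
      obtain ⟨k, hk⟩ := h4 ⟨e1.mpr hq1, fun h => hq2 (e2.mp h)⟩
      exact ⟨-k, by push_cast; linarith⟩
    · rintro ⟨hq1, hq2⟩
      exact (h5 ⟨e1.mpr hq1, e2.mpr hq2⟩).symm
  · rintro p q r ⟨h1, h2, h3, h4, h5⟩ ⟨g1, g2, g3, g4, g5⟩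
    have key : ∀ a b : ℂ, ‖a‖ = ‖b‖ → (a = 0 ↔ b = 0) := by
      intro a b h
      rw [← norm_eq_zero, h, norm_eq_zero]
    have e1 : p.1.1 = 0 ↔ q.1.1 = 0 := key _ _ h1
    have e2 : p.1.2 = 0 ↔ q.1.2 = 0 := key _ _ h2
    refine ⟨h1.trans g1, h2.trans g2, ?_, ?_, ?_⟩
    · rintro ⟨hp1, hp2⟩
      obtain ⟨k, hk⟩ := h3 ⟨hp1, hp2⟩
      obtain ⟨l, hl⟩ := g3 ⟨fun h => hp1 (e1.mpr h), e2.mp hp2⟩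
      exact ⟨k + l, by push_cast; linarith⟩
    · rintro ⟨hp1, hp2⟩
      obtain ⟨k, hk⟩ := h4 ⟨hp1, hp2⟩
      obtain ⟨l, hl⟩ := g4 ⟨e1.mp hp1, fun h => hp2 (e2.mpr h)⟩
      refine ⟨k + l, by push_cast; linarith [mul_add θ (k : ℝ) (l : ℝ)]⟩
    · rintro ⟨hp1, hp2⟩
      exact (h5 ⟨hp1, hp2⟩).trans (g5 ⟨e1.mp hp1, e2.mp hp2⟩)

/-- The setoid on `ℂ² × ℝ` given by the relation `∼`. -/
def mSetoid (θ : ℝ) : Setoid ((ℂ × ℂ) × ℝ) := ⟨mrel θ, mrel_equivalence θ⟩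

/-- The quotient space `Q_θ = (ℂ² × ℝ)/∼`, with the quotient topology. -/
abbrev Qspace (θ : ℝ) : Type := Quotient (mSetoid θ)

/-- The quotient map `q : ℂ² × ℝ → Q_θ`. -/
def qmap (θ : ℝ) : (ℂ × ℂ) × ℝ → Qspace θ := Quotient.mk (mSetoid θ)

/-!
Given `x ∼ u`, rotate each complex coordinate by the unit scalar carrying `x` to `u` and translate
the real coordinate by `u.2 - x.2`. This continuous map sends `x` to `u` and every `z` near `x` to a
point equivalent to `z`: near `x` the complex coordinates vanish only where those of `x` do, and the
group of real shifts allowed at a point only grows as fewer of its coordinates vanish. Hence the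
saturation of an open set is a neighbourhood of each of its points.
-/

theorem isOpenMap_quotient_mk_of_exists_continuousAt_eventually_rel {X : Type*}
    [TopologicalSpace X] (s : Setoid X)
    (h : ∀ x u, s x u → ∃ φ : X → X, ContinuousAt φ x ∧ φ x = u ∧ ∀ᶠ z in 𝓝 x, s (φ z) z) :
    IsOpenMap (Quotient.mk s) := by
  intro U hU
  rw [← isQuotientMap_quotient_mk'.isOpen_preimage, isOpen_iff_mem_nhds]
  rintro x ⟨u, huU, hux⟩
  obtain ⟨φ, hφ, hφx, hφs⟩ := h x u (Quotient.exact hux.symm)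
  have hφU : ∀ᶠ z in 𝓝 x, φ z ∈ U := hφ.preimage_mem_nhds (hφx ▸ hU.mem_nhds huU)
  filter_upwards [hφU, hφs] with z hzU hzs
  exact ⟨φ z, hzU, Quotient.sound hzs⟩

theorem ContinuousAt.eventually_ne_of_ne {X M : Type*} [TopologicalSpace X] [TopologicalSpace M]
    [T1Space M] {f : X → M} {x : X} (hf : ContinuousAt f x) (a : M) :
    ∀ᶠ z in 𝓝 x, f x ≠ a → f z ≠ a := by
  by_cases hx : f x = a
  · exact .of_forall fun _ h => absurd hx h
  · exact (hf.eventually_ne hx).mono fun _ hz _ => hz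

theorem exists_norm_eq_one_mul_of_norm_eq {𝕜 : Type*} [NormedDivisionRing 𝕜] {u c : 𝕜}
    (h : ‖u‖ = ‖c‖) : ∃ ζ : 𝕜, ‖ζ‖ = 1 ∧ u = ζ * c := by
  by_cases hc : c = 0
  · exact ⟨1, norm_one, by simpa [hc] using h⟩
  · refine ⟨u / c, ?_, (div_mul_cancel₀ u hc).symm⟩
    rw [norm_div, h, div_self (norm_ne_zero_iff.mpr hc)]

theorem mrel_of_norm_eq {θ : ℝ} {p q : (ℂ × ℂ) × ℝ} (h₁ : ‖p.1.1‖ = ‖q.1.1‖)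
    (h₂ : ‖p.1.2‖ = ‖q.1.2‖) (hτ : p.2 = q.2) : mrel θ p q :=
  ⟨h₁, h₂, fun _ => ⟨0, by simp [hτ]⟩, fun _ => ⟨0, by simp [hτ]⟩, fun _ => hτ⟩

theorem mrel_add_shift {θ : ℝ} {u x : (ℂ × ℂ) × ℝ} (hux : mrel θ u x) {p : (ℂ × ℂ) × ℝ}
    (h₁ : x.1.1 ≠ 0 → p.1.1 ≠ 0) (h₂ : x.1.2 ≠ 0 → p.1.2 ≠ 0) :
    mrel θ (p.1, p.2 + (u.2 - x.2)) p := by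
  obtain ⟨n₁, n₂, hint, hmulθ, hfix⟩ := hux
  have hu₁ : p.1.1 = 0 → u.1.1 = 0 := fun hp =>
    norm_eq_zero.1 (n₁ ▸ norm_eq_zero.2 (not_imp_not.1 h₁ hp))
  have hu₂ : p.1.2 = 0 → u.1.2 = 0 := fun hp =>
    norm_eq_zero.1 (n₂ ▸ norm_eq_zero.2 (not_imp_not.1 h₂ hp))
  refine ⟨rfl, rfl, ?_, ?_, ?_⟩ <;> simp only [add_sub_cancel_left]
  · rintro ⟨-, hp₂⟩
    by_cases hu₁' : u.1.1 = 0
    · exact ⟨0, by simp [hfix ⟨hu₁', hu₂ hp₂⟩]⟩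
    · exact hint ⟨hu₁', hu₂ hp₂⟩
  · rintro ⟨hp₁, -⟩
    by_cases hu₂' : u.1.2 = 0
    · exact ⟨0, by simp [hfix ⟨hu₁ hp₁, hu₂'⟩]⟩
    · exact hmulθ ⟨hu₁ hp₁, hu₂'⟩
  · rintro ⟨hp₁, hp₂⟩
    simpa [sub_eq_zero] using hfix ⟨hu₁ hp₁, hu₂ hp₂⟩

theorem isOpenMap_qmap_general (θ : ℝ) : IsOpenMap (qmap θ) := by
  refine isOpenMap_quotient_mk_of_exists_continuousAt_eventually_rel _ fun x u hxu => ?_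
  have hux : mrel θ u x := (mrel_equivalence θ).symm hxu
  obtain ⟨ζ₁, hζ₁, hu₁⟩ := exists_norm_eq_one_mul_of_norm_eq hux.1
  obtain ⟨ζ₂, hζ₂, hu₂⟩ := exists_norm_eq_one_mul_of_norm_eq hux.2.1
  refine ⟨fun z => ((ζ₁ * z.1.1, ζ₂ * z.1.2), z.2 + (u.2 - x.2)), by fun_prop,
    by simp [← hu₁, ← hu₂], ?_⟩
  filter_upwards [(continuous_fst.fst.continuousAt (x := x)).eventually_ne_of_ne 0,
    (continuous_fst.snd.continuousAt (x := x)).eventually_ne_of_ne 0] with z h₁ h₂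
  have hrot : mrel θ ((ζ₁ * z.1.1, ζ₂ * z.1.2), z.2 + (u.2 - x.2)) (z.1, z.2 + (u.2 - x.2)) :=
    mrel_of_norm_eq (by simp [hζ₁]) (by simp [hζ₂]) rfl
  exact (mrel_equivalence θ).trans hrot (mrel_add_shift hux h₁ h₂)

/-- The quotient map `q : ℂ² × ℝ → Q_θ` is an open map. -/
theorem isOpenMap_qmap (θ : ℝ) (hθ : Irrational θ) : IsOpenMap (qmap θ) :=
  isOpenMap_qmap_general θ
end

section
/- The set Γ₁ is open in Q_θ, its subspace topology is Hausdorff, and Γ₁ is the largest such subset: every open subset U ⊆ Q_θ whose subspace topology is Hausdorff satisfies U ⊆ Γ₁. -/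
open Filter Topology

/-- `Γ₁ = q({((z₁,z₂),τ) : z₁ ≠ 0 and z₂ ≠ 0})`. -/
def Gamma1 (θ : ℝ) : Set (Qspace θ) := qmap θ '' {p | p.1.1 ≠ 0 ∧ p.1.2 ≠ 0}

/-- `Γ₂' = q({((z₁,z₂),τ) : z₁ ≠ 0 = z₂})`. -/
def Gamma2' (θ : ℝ) : Set (Qspace θ) := qmap θ '' {p | p.1.1 ≠ 0 ∧ p.1.2 = 0}

/-- `Γ₂'' = q({((z₁,z₂),τ) : z₁ = 0 ≠ z₂})`. -/
def Gamma2'' (θ : ℝ) : Set (Qspace θ) := qmap θ '' {p | p.1.1 = 0 ∧ p.1.2 ≠ 0}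

/-- `Γ₂ = Γ₂' ∪ Γ₂''`. -/
def Gamma2 (θ : ℝ) : Set (Qspace θ) := Gamma2' θ ∪ Gamma2'' θ

/-- `Γ₃ = q({((0,0),τ) : τ ∈ ℝ})`. -/
def Gamma3 (θ : ℝ) : Set (Qspace θ) := qmap θ '' {p | p.1.1 = 0 ∧ p.1.2 = 0}

/-!
Points of `Γ₁` are determined by `(|z₁|, |z₂|)`, which is a continuous function on `Q_θ`, so `Γ₁`
is Hausdorff. Conversely, let `q(z, t)` lie outside `Γ₁`. Approaching `z` through points with both
coordinates nonzero, where the time coordinate is forgotten, shows that `q(z, t)` and `q(z, s)` are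
inseparable for every `s`; yet they are distinct unless `t - s` lies in the countable set `ℤ ∪ θℤ`.
Such an `s` can be found arbitrarily close to `t`, so no open Hausdorff set contains `q(z, t)`.
-/

open Set

theorem IsOpen.eq_of_nhds_inf_neBot {X : Type*} [TopologicalSpace X] {U : Set X} (hU : IsOpen U)
    [T2Space U] {x y : X} (hx : x ∈ U) (hy : y ∈ U) (h : (𝓝 x ⊓ 𝓝 y).NeBot) : x = y := by
  have hU_mem : range ((↑) : U → X) ∈ 𝓝 x ⊓ 𝓝 y := by
    rw [Subtype.range_coe]
    exact mem_inf_of_left (hU.mem_nhds hx)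
  have : (𝓝 (⟨x, hx⟩ : U) ⊓ 𝓝 ⟨y, hy⟩).NeBot := by
    rw [nhds_subtype_eq_comap, nhds_subtype_eq_comap, ← comap_inf]
    exact h.comap_of_range_mem hU_mem
  exact congrArg Subtype.val (eq_of_nhds_neBot this)

namespace Qspace

variable (θ : ℝ)

theorem continuous_qmap : Continuous (qmap θ) := continuous_quot_mk

theorem qmap_mem_Gamma1_iff {p : (ℂ × ℂ) × ℝ} :
    qmap θ p ∈ Gamma1 θ ↔ p.1.1 ≠ 0 ∧ p.1.2 ≠ 0 := by
  refine ⟨?_, fun h => ⟨p, h, rfl⟩⟩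
  rintro ⟨p', ⟨h₁, h₂⟩, hp⟩
  obtain ⟨hn₁, hn₂, -⟩ : mrel θ p' p := Quotient.exact hp
  rw [← norm_ne_zero_iff, hn₁, norm_ne_zero_iff] at h₁
  rw [← norm_ne_zero_iff, hn₂, norm_ne_zero_iff] at h₂
  exact ⟨h₁, h₂⟩

theorem isOpen_Gamma1 : IsOpen (Gamma1 θ) := by
  have h_preimage : qmap θ ⁻¹' Gamma1 θ = {p | p.1.1 ≠ 0} ∩ {p | p.1.2 ≠ 0} :=
    Set.ext fun _ => qmap_mem_Gamma1_iff θ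
  refine isOpen_coinduced.mpr (?_ : IsOpen (qmap θ ⁻¹' Gamma1 θ))
  rw [h_preimage]
  exact (isOpen_ne_fun continuous_fst.fst continuous_const).inter
    (isOpen_ne_fun continuous_fst.snd continuous_const)

noncomputable def norms : Qspace θ → ℝ × ℝ :=
  Quotient.lift (fun p => (‖p.1.1‖, ‖p.1.2‖)) fun _ _ h => Prod.ext h.1 h.2.1

theorem continuous_norms : Continuous (norms θ) :=
  continuous_quot_lift _ ((continuous_norm.comp continuous_fst.fst).prodMk
    (continuous_norm.comp continuous_fst.snd))

theorem injOn_norms_Gamma1 : InjOn (norms θ) (Gamma1 θ) := by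
  rintro _ ⟨p, hp, rfl⟩ _ ⟨p', -, rfl⟩ h
  obtain ⟨h₁, h₂⟩ := Prod.ext_iff.mp h
  exact Quotient.sound ⟨h₁, h₂, fun h => absurd h.2 hp.2, fun h => absurd h.1 hp.1,
    fun h => absurd h.1 hp.1⟩

theorem t2Space_Gamma1 : T2Space (Gamma1 θ) :=
  T2Space.of_injective_continuous (injOn_norms_Gamma1 θ).injective
    ((continuous_norms θ).comp continuous_subtype_val)

theorem qmap_eq_of_ne_zero {z : ℂ × ℂ} (h₁ : z.1 ≠ 0) (h₂ : z.2 ≠ 0) (t s : ℝ) :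
    qmap θ (z, t) = qmap θ (z, s) :=
  Quotient.sound ⟨rfl, rfl, fun h => absurd h.2 h₂, fun h => absurd h.1 h₁, fun h => absurd h.1 h₁⟩

theorem nhds_qmap_inf_neBot (z : ℂ × ℂ) (t s : ℝ) :
    (𝓝 (qmap θ (z, t)) ⊓ 𝓝 (qmap θ (z, s))).NeBot := by
  set D : Set (ℂ × ℂ) := {0}ᶜ ×ˢ {0}ᶜ
  have hD : (𝓝[D] z).NeBot :=
    mem_closure_iff_nhdsWithin_neBot.mp ((dense_compl_singleton 0).prod (dense_compl_singleton 0) z)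
  have tendsto_at (u : ℝ) : Tendsto (fun w => qmap θ (w, u)) (𝓝[D] z) (𝓝 (qmap θ (z, u))) :=
    (((continuous_qmap θ).comp (continuous_id.prodMk continuous_const)).tendsto z).mono_left
      nhdsWithin_le_nhds
  have time_forgotten : (fun w => qmap θ (w, t)) =ᶠ[𝓝[D] z] fun w => qmap θ (w, s) :=
    eventually_mem_nhdsWithin.mono fun w hw => qmap_eq_of_ne_zero θ hw.1 hw.2 t s
  exact (hD.map _).mono (le_inf (tendsto_at t) ((tendsto_at s).congr' time_forgotten.symm))

/-- The time shifts `ℤ ∪ θℤ` absorbed by the relation `∼` at some point outside `Γ₁`. -/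
def periods : Set ℝ := range ((↑) : ℤ → ℝ) ∪ range fun k : ℤ => θ * k

theorem countable_periods : (periods θ).Countable :=
  (countable_range _).union (countable_range _)

theorem sub_mem_periods_of_qmap_eq {z : ℂ × ℂ} (hz : z.1 = 0 ∨ z.2 = 0) {t s : ℝ}
    (h : qmap θ (z, t) = qmap θ (z, s)) : t - s ∈ periods θ := by
  obtain ⟨-, -, h_Gamma2', h_Gamma2'', h_Gamma3⟩ : mrel θ (z, t) (z, s) := Quotient.exact h
  by_cases h₁ : z.1 = 0 <;> by_cases h₂ : z.2 = 0
  · exact Or.inl ⟨0, by simp [show t = s from h_Gamma3 ⟨h₁, h₂⟩]⟩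
  · obtain ⟨k, hk⟩ := h_Gamma2'' ⟨h₁, h₂⟩
    exact Or.inr ⟨k, hk.symm⟩
  · obtain ⟨k, hk⟩ := h_Gamma2' ⟨h₁, h₂⟩
    exact Or.inl ⟨k, hk.symm⟩
  · exact (hz.elim h₁ h₂).elim

theorem subset_Gamma1_of_isOpen {U : Set (Qspace θ)} (hU : IsOpen U) [T2Space U] :
    U ⊆ Gamma1 θ := by
  rintro x hxU
  obtain ⟨⟨z, t⟩, rfl⟩ : ∃ p, qmap θ p = x := Quotient.exists_rep x
  by_contra hx
  have hz : z.1 = 0 ∨ z.2 = 0 := by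
    rw [qmap_mem_Gamma1_iff] at hx
    tauto
  have hV : IsOpen {s : ℝ | qmap θ (z, s) ∈ U} :=
    hU.preimage ((continuous_qmap θ).comp (continuous_const.prodMk continuous_id))
  obtain ⟨s, hsU, hs⟩ :=
    (((countable_periods θ).image (t - ·)).dense_compl ℝ).inter_open_nonempty _ hV ⟨t, hxU⟩
  have := hU.eq_of_nhds_inf_neBot hxU hsU (nhds_qmap_inf_neBot θ z t s)
  exact hs ⟨t - s, sub_mem_periods_of_qmap_eq θ hz this, sub_sub_cancel t s⟩

end Qspace

theorem Gamma1_largest_open_hausdorff_general (θ : ℝ) :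
    IsOpen (Gamma1 θ) ∧ T2Space (Gamma1 θ) ∧
      ∀ U : Set (Qspace θ), IsOpen U → T2Space U → U ⊆ Gamma1 θ :=
  ⟨Qspace.isOpen_Gamma1 θ, Qspace.t2Space_Gamma1 θ,
    fun _ hU _ => Qspace.subset_Gamma1_of_isOpen θ hU⟩

/-- `Γ₁` is open in `Q_θ`, its subspace topology is Hausdorff, and it is the largest
such subset: every open `U ⊆ Q_θ` whose subspace topology is Hausdorff satisfies `U ⊆ Γ₁`. -/
theorem Gamma1_largest_open_hausdorff (θ : ℝ) (hθ : Irrational θ) :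
    IsOpen (Gamma1 θ) ∧ T2Space (Gamma1 θ) ∧
      ∀ U : Set (Qspace θ), IsOpen U → T2Space U → U ⊆ Gamma1 θ :=
  Gamma1_largest_open_hausdorff_general θ
end

section
/- The map Ψ₂' : (0, ∞) × (ℝ/ℤ) → Γ₂' defined by Ψ₂'(r, τ + ℤ) := q((r, 0), τ) is well defined and is a homeomorphism onto Γ₂' (with its topology as a subspace of Q_θ); similarly, the map Ψ₂'' : (0, ∞) × (ℝ/θℤ) → Γ₂'' defined by Ψ₂''(r, τ + θℤ) := q((0, r), τ) is well defined and is a homeomorphism onto Γ₂''. -/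
open Filter Topology

/-!
The quotient map `q` is open: an equivalence `p ∼ u` is realised near `p` by rotating each
coordinate by a unit complex number and translating `τ`, and this map still respects `∼` at the
nearby points, which have no more vanishing coordinates than `p`. The stratum
`Σ₂' = {z₁ ≠ 0 = z₂}` (`Sigma2'`) is saturated, and on it `x ↦ (|z₁|, τ + ℤ)` is a quotient map
with the same fibres as `q`. A map out of such a quotient that factors the restriction of an open
quotient map to a saturated set is an embedding, so it is a homeomorphism onto `q(Σ₂') = Γ₂'`.
The same argument applies to `Σ₂'' = {z₁ = 0 ≠ z₂}` and `τ + θℤ`.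
-/

open Set Function

theorem AddCircle.coe_eq_coe_iff_exists_int {p τ σ : ℝ} :
    (τ : AddCircle p) = σ ↔ ∃ k : ℤ, τ - σ = p * k := by
  rw [QuotientAddGroup.eq_iff_sub_mem, AddSubgroup.mem_zmultiples_iff]
  simp only [zsmul_eq_mul, mul_comm, eq_comm]

theorem Quotient.isOpenQuotientMap_mk_of_exists_tendsto {X : Type*} [TopologicalSpace X]
    (s : Setoid X)
    (h : ∀ a b, s a b → ∃ f : X → X, Tendsto f (𝓝 a) (𝓝 b) ∧ ∀ᶠ x in 𝓝 a, s x (f x)) :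
    IsOpenQuotientMap (Quotient.mk s) := by
  refine ⟨Quotient.mk_surjective, continuous_quotient_mk', fun U hU => ?_⟩
  rw [← isQuotientMap_quotient_mk'.isOpen_preimage, isOpen_iff_mem_nhds]
  rintro a ⟨b, hb, hba⟩
  obtain ⟨f, hf, hfa⟩ := h a b (s.symm (Quotient.exact hba))
  filter_upwards [hf (hU.mem_nhds hb), hfa] with x hxU hx
  exact ⟨f x, hxU, Quotient.sound (s.symm hx)⟩

theorem IsOpenQuotientMap.exists_homeomorph_image {B C D : Type*} [TopologicalSpace B]
    [TopologicalSpace C] [TopologicalSpace D] {q : B → D} (hq : IsOpenQuotientMap q)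
    {S : Set B} (hS : q ⁻¹' (q '' S) ⊆ S) {p : S → C} (hp : IsQuotientMap p)
    (hpq : ∀ x y, p x = p y ↔ q x = q y) :
    ∃ Ψ : C ≃ₜ q '' S, ∀ x, (Ψ (p x) : D) = q x := by
  set g : C → D := q ∘ (↑) ∘ surjInv hp.surjective
  have hgp : g ∘ p = q ∘ (↑) :=
    funext fun x => (hpq _ x).1 (surjInv_eq hp.surjective (p x))
  have hg : Injective g := by
    intro c c' h
    obtain ⟨x, rfl⟩ := hp.surjective c
    obtain ⟨y, rfl⟩ := hp.surjective c'
    exact (hpq x y).2 ((congrFun hgp x).symm.trans (h.trans (congrFun hgp y)))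
  have hemb : IsEmbedding g := isEmbedding_of_isOpenQuotientMap_of_isInducing _ _ p q hgp
    .subtypeVal hp hq hg (by rwa [Subtype.range_coe])
  have hrange : range g = q '' S := by
    rw [← hp.surjective.range_comp, hgp, range_comp, Subtype.range_coe]
  exact ⟨hemb.toHomeomorph.trans (.setCongr hrange), fun x => congrFun hgp x⟩

theorem exists_norm_eq_one_mul_eq {𝕜 : Type*} [NormedDivisionRing 𝕜] {u z : 𝕜} (h : ‖u‖ = ‖z‖) :
    ∃ c : 𝕜, ‖c‖ = 1 ∧ u = c * z := by
  rcases eq_or_ne z 0 with rfl | hz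
  · exact ⟨1, by simp, by simpa using h⟩
  · exact ⟨u / z, by rw [norm_div, h, div_self (norm_ne_zero_iff.2 hz)],
      (div_mul_cancel₀ u hz).symm⟩

namespace mrel

variable {θ : ℝ} {a b : (ℂ × ℂ) × ℝ}

theorem fst_eq_zero_iff (h : mrel θ a b) : a.1.1 = 0 ↔ b.1.1 = 0 := by
  rw [← norm_eq_zero, h.1, norm_eq_zero]

theorem snd_eq_zero_iff (h : mrel θ a b) : a.1.2 = 0 ↔ b.1.2 = 0 := by
  rw [← norm_eq_zero, h.2.1, norm_eq_zero]

end mrel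

theorem isOpenQuotientMap_qmap (θ : ℝ) : IsOpenQuotientMap (qmap θ) := by
  refine Quotient.isOpenQuotientMap_mk_of_exists_tendsto _ fun a b hab => ?_
  obtain ⟨h1, h2, h3, h4, h5⟩ : mrel θ a b := hab
  obtain ⟨c₁, hc₁, hb₁⟩ := exists_norm_eq_one_mul_eq h1.symm
  obtain ⟨c₂, hc₂, hb₂⟩ := exists_norm_eq_one_mul_eq h2.symm
  have hshift_int : a.1.2 = 0 → ∃ k : ℤ, a.2 - b.2 = k := fun ha₂ => by
    by_cases ha₁ : a.1.1 = 0
    · exact ⟨0, by simp [h5 ⟨ha₁, ha₂⟩]⟩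
    · exact h3 ⟨ha₁, ha₂⟩
  have hshift_θ : a.1.1 = 0 → ∃ k : ℤ, a.2 - b.2 = θ * k := fun ha₁ => by
    by_cases ha₂ : a.1.2 = 0
    · exact ⟨0, by simp [h5 ⟨ha₁, ha₂⟩]⟩
    · exact h4 ⟨ha₁, ha₂⟩
  let f : (ℂ × ℂ) × ℝ → (ℂ × ℂ) × ℝ := fun x => ((c₁ * x.1.1, c₂ * x.1.2), x.2 + (b.2 - a.2))
  have hfa : f a = b := by ext <;> simp [f, hb₁, hb₂]
  refine ⟨f, hfa ▸ (by fun_prop : Continuous f).tendsto a, ?_⟩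
  have hne : ∀ᶠ x in 𝓝 a, (a.1.1 ≠ 0 → x.1.1 ≠ 0) ∧ (a.1.2 ≠ 0 → x.1.2 ≠ 0) :=
    (eventually_imp_distrib_left.2 fun h => (continuous_fst.fst.continuousAt).eventually_ne h).and
      (eventually_imp_distrib_left.2 fun h => (continuous_fst.snd.continuousAt).eventually_ne h)
  filter_upwards [hne] with x ⟨hx₁, hx₂⟩
  refine ⟨by simp [f, hc₁], by simp [f, hc₂], fun hx => ?_, fun hx => ?_, fun hx => ?_⟩
  · obtain ⟨k, hk⟩ := hshift_int (not_imp_not.1 hx₂ hx.2)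
    exact ⟨k, by simp only [f]; linarith⟩
  · obtain ⟨k, hk⟩ := hshift_θ (not_imp_not.1 hx₁ hx.1)
    exact ⟨k, by simp only [f]; linarith⟩
  · have := h5 ⟨not_imp_not.1 hx₁ hx.1, not_imp_not.1 hx₂ hx.2⟩
    simp only [f]; linarith

def Sigma2' : Set ((ℂ × ℂ) × ℝ) := {p | p.1.1 ≠ 0 ∧ p.1.2 = 0}

def Sigma2'' : Set ((ℂ × ℂ) × ℝ) := {p | p.1.1 = 0 ∧ p.1.2 ≠ 0}

noncomputable def coordSigma2' (x : Sigma2') : {r : ℝ // 0 < r} × AddCircle (1 : ℝ) :=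
  (⟨‖x.1.1.1‖, norm_pos_iff.2 x.2.1⟩, x.1.2)

noncomputable def coordSigma2'' (θ : ℝ) (x : Sigma2'') : {r : ℝ // 0 < r} × AddCircle θ :=
  (⟨‖x.1.1.2‖, norm_pos_iff.2 x.2.2⟩, x.1.2)

theorem mk_mem_Sigma2' (r : {r : ℝ // 0 < r}) (τ : ℝ) : ((((r : ℝ) : ℂ), 0), τ) ∈ Sigma2' :=
  ⟨Complex.ofReal_ne_zero.2 r.2.ne', rfl⟩

theorem mk_mem_Sigma2'' (r : {r : ℝ // 0 < r}) (τ : ℝ) : ((0, ((r : ℝ) : ℂ)), τ) ∈ Sigma2'' :=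
  ⟨rfl, Complex.ofReal_ne_zero.2 r.2.ne'⟩

theorem coordSigma2'_mk (r : {r : ℝ // 0 < r}) (τ : ℝ) :
    coordSigma2' ⟨_, mk_mem_Sigma2' r τ⟩ = (r, (τ : AddCircle (1 : ℝ))) := by
  simp [coordSigma2', abs_of_pos r.2]

theorem coordSigma2''_mk (θ : ℝ) (r : {r : ℝ // 0 < r}) (τ : ℝ) :
    coordSigma2'' θ ⟨_, mk_mem_Sigma2'' r τ⟩ = (r, (τ : AddCircle θ)) := by
  simp [coordSigma2'', abs_of_pos r.2]

theorem continuous_coordSigma2' : Continuous coordSigma2' := by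
  unfold coordSigma2'; fun_prop

theorem continuous_coordSigma2'' (θ : ℝ) : Continuous (coordSigma2'' θ) := by
  unfold coordSigma2''; fun_prop

theorem isQuotientMap_coordSigma2' : IsQuotientMap coordSigma2' := by
  refine .of_comp (f := fun x : {r : ℝ // 0 < r} × ℝ => (⟨_, mk_mem_Sigma2' x.1 x.2⟩ : Sigma2'))
    (by fun_prop) continuous_coordSigma2' ?_
  rw [show coordSigma2' ∘ _ = Prod.map id ((↑) : ℝ → AddCircle (1 : ℝ)) from
    funext fun x => coordSigma2'_mk x.1 x.2]
  exact (IsOpenQuotientMap.id.prodMap QuotientAddGroup.isOpenQuotientMap_mk).isQuotientMap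

theorem isQuotientMap_coordSigma2'' (θ : ℝ) : IsQuotientMap (coordSigma2'' θ) := by
  refine .of_comp (f := fun x : {r : ℝ // 0 < r} × ℝ => (⟨_, mk_mem_Sigma2'' x.1 x.2⟩ : Sigma2''))
    (by fun_prop) (continuous_coordSigma2'' θ) ?_
  rw [show coordSigma2'' θ ∘ _ = Prod.map id ((↑) : ℝ → AddCircle θ) from
    funext fun x => coordSigma2''_mk θ x.1 x.2]
  exact (IsOpenQuotientMap.id.prodMap QuotientAddGroup.isOpenQuotientMap_mk).isQuotientMap

theorem coordSigma2'_eq_iff (θ : ℝ) (x y : Sigma2') :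
    coordSigma2' x = coordSigma2' y ↔ qmap θ x = qmap θ y := by
  obtain ⟨⟨⟨z, z'⟩, τ⟩, hz, hz' : z' = 0⟩ := x
  obtain ⟨⟨⟨w, w'⟩, σ⟩, -, hw' : w' = 0⟩ := y
  subst hz' hw'
  rw [qmap, Quotient.eq]
  change _ ↔ mrel θ _ _
  simp [coordSigma2', AddCircle.coe_eq_coe_iff_exists_int, mrel, hz]

theorem coordSigma2''_eq_iff (θ : ℝ) (x y : Sigma2'') :
    coordSigma2'' θ x = coordSigma2'' θ y ↔ qmap θ x = qmap θ y := by
  obtain ⟨⟨⟨z', z⟩, τ⟩, hz' : z' = 0, hz⟩ := x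
  obtain ⟨⟨⟨w', w⟩, σ⟩, hw' : w' = 0, -⟩ := y
  subst hz' hw'
  rw [qmap, Quotient.eq]
  change _ ↔ mrel θ _ _
  simp [coordSigma2'', AddCircle.coe_eq_coe_iff_exists_int, mrel, hz]

theorem qmap_preimage_Gamma2'_subset (θ : ℝ) : qmap θ ⁻¹' Gamma2' θ ⊆ Sigma2' := by
  rintro x ⟨y, ⟨hy₁, hy₂⟩, hyx⟩
  have h : mrel θ y x := Quotient.exact hyx
  exact ⟨mt h.fst_eq_zero_iff.2 hy₁, h.snd_eq_zero_iff.1 hy₂⟩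

theorem qmap_preimage_Gamma2''_subset (θ : ℝ) : qmap θ ⁻¹' Gamma2'' θ ⊆ Sigma2'' := by
  rintro x ⟨y, ⟨hy₁, hy₂⟩, hyx⟩
  have h : mrel θ y x := Quotient.exact hyx
  exact ⟨h.fst_eq_zero_iff.1 hy₁, mt h.snd_eq_zero_iff.2 hy₂⟩

theorem Gamma2'_Gamma2''_homeo_general (θ : ℝ) :
    (∃ Ψ : {r : ℝ // 0 < r} × AddCircle (1 : ℝ) ≃ₜ (Gamma2' θ),
      ∀ (r : {r : ℝ // 0 < r}) (τ : ℝ),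
        (Ψ (r, (τ : AddCircle (1 : ℝ))) : Qspace θ) = qmap θ ((((r : ℝ) : ℂ), 0), τ)) ∧
    (∃ Ψ : {r : ℝ // 0 < r} × AddCircle θ ≃ₜ (Gamma2'' θ),
      ∀ (r : {r : ℝ // 0 < r}) (τ : ℝ),
        (Ψ (r, (τ : AddCircle θ)) : Qspace θ) = qmap θ ((0, ((r : ℝ) : ℂ)), τ)) := by
  obtain ⟨Ψ', hΨ'⟩ := (isOpenQuotientMap_qmap θ).exists_homeomorph_image
    (qmap_preimage_Gamma2'_subset θ) isQuotientMap_coordSigma2' (coordSigma2'_eq_iff θ)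
  obtain ⟨Ψ'', hΨ''⟩ := (isOpenQuotientMap_qmap θ).exists_homeomorph_image
    (qmap_preimage_Gamma2''_subset θ) (isQuotientMap_coordSigma2'' θ) (coordSigma2''_eq_iff θ)
  refine ⟨⟨Ψ', fun r τ => ?_⟩, ⟨Ψ'', fun r τ => ?_⟩⟩
  · rw [← coordSigma2'_mk]
    exact hΨ' _
  · rw [← coordSigma2''_mk]
    exact hΨ'' _

/-- The map `Ψ₂' : (0,∞) × (ℝ/ℤ) → Γ₂'`, `Ψ₂'(r, τ + ℤ) = q((r, 0), τ)`, is well defined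
and a homeomorphism onto `Γ₂'`; similarly `Ψ₂'' : (0,∞) × (ℝ/θℤ) → Γ₂''`,
`Ψ₂''(r, τ + θℤ) = q((0, r), τ)`, is well defined and a homeomorphism onto `Γ₂''`. -/
theorem Gamma2'_Gamma2''_homeo (θ : ℝ) (hθ : Irrational θ) :
    (∃ Ψ : {r : ℝ // 0 < r} × AddCircle (1 : ℝ) ≃ₜ (Gamma2' θ),
      ∀ (r : {r : ℝ // 0 < r}) (τ : ℝ),
        (Ψ (r, (τ : AddCircle (1 : ℝ))) : Qspace θ) = qmap θ ((((r : ℝ) : ℂ), 0), τ)) ∧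
    (∃ Ψ : {r : ℝ // 0 < r} × AddCircle θ ≃ₜ (Gamma2'' θ),
      ∀ (r : {r : ℝ // 0 < r}) (τ : ℝ),
        (Ψ (r, (τ : AddCircle θ)) : Qspace θ) = qmap θ ((0, ((r : ℝ) : ℂ)), τ)) :=
  Gamma2'_Gamma2''_homeo_general θ
end

section
/- The map Ψ₃ : ℝ → Γ₃ defined by Ψ₃(τ) := q((0, 0), τ) is a homeomorphism from ℝ onto Γ₃ (with its topology as a subspace of Q_θ), and Γ₃ is a closed subset of Q_θ. -/
open Filter Topology

/-- Closed subsets of the range of `f` are saturated, so the quotient map keeps them closed. -/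
theorem Topology.IsClosedEmbedding.quotientMk_comp {X Z : Type*} [TopologicalSpace X]
    [TopologicalSpace Z] {s : Setoid X} {f : Z → X} (hf : IsClosedEmbedding f)
    (hclass : ∀ a y, s y (f a) → y = f a) : IsClosedEmbedding (Quotient.mk s ∘ f) := by
  have hq : IsQuotientMap (Quotient.mk s) := isQuotientMap_quot_mk
  have hsat : ∀ C : Set Z, Quotient.mk s ⁻¹' (Quotient.mk s '' (f '' C)) = f '' C := by
    refine fun C ↦ Set.Subset.antisymm ?_ (Set.subset_preimage_image _ _)
    rintro y ⟨_, ⟨a, ha, rfl⟩, hy⟩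
    exact ⟨a, ha, (hclass a y (Quotient.exact hy.symm)).symm⟩
  refine .of_continuous_injective_isClosedMap (hq.continuous.comp hf.continuous) ?_ ?_
  · exact fun a b hab ↦ hf.injective (hclass b (f a) (Quotient.exact hab))
  · intro C hC
    rw [Set.image_comp, ← hq.isClosed_preimage, hsat]
    exact hf.isClosedMap C hC

theorem eq_of_mrel_zero_zero {θ τ : ℝ} {p : (ℂ × ℂ) × ℝ} (h : mrel θ p ((0, 0), τ)) :
    p = ((0, 0), τ) := by
  obtain ⟨h₁, h₂, -, -, hτ⟩ := h
  have hz₁ : p.1.1 = 0 := norm_eq_zero.mp (by simpa using h₁)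
  have hz₂ : p.1.2 = 0 := norm_eq_zero.mp (by simpa using h₂)
  exact Prod.ext (Prod.ext hz₁ hz₂) (hτ ⟨hz₁, hz₂⟩)

theorem range_qmap_zero_zero (θ : ℝ) : Set.range (fun τ ↦ qmap θ ((0, 0), τ)) = Gamma3 θ := by
  ext x
  constructor
  · rintro ⟨τ, rfl⟩
    exact ⟨((0, 0), τ), ⟨rfl, rfl⟩, rfl⟩
  · rintro ⟨⟨⟨z₁, z₂⟩, τ⟩, ⟨rfl, rfl⟩, rfl⟩
    exact ⟨τ, rfl⟩

theorem isClosedEmbedding_qmap_zero_zero (θ : ℝ) :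
    IsClosedEmbedding (fun τ : ℝ ↦ qmap θ ((0, 0), τ)) :=
  IsClosedEmbedding.quotientMk_comp (s := mSetoid θ)
    (.of_continuous_injective_isClosedMap (by fun_prop) (Prod.mk_right_injective _)
      (isClosedMap_prodMk_left _))
    (fun _ _ ↦ eq_of_mrel_zero_zero)

theorem Gamma3_homeo_and_isClosed_general (θ : ℝ) :
    (∃ Ψ₃ : ℝ ≃ₜ (Gamma3 θ), ∀ τ : ℝ, (Ψ₃ τ : Qspace θ) = qmap θ ((0, 0), τ)) ∧
    IsClosed (Gamma3 θ) := by
  have hΨ₃ := isClosedEmbedding_qmap_zero_zero θ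
  have hrange := range_qmap_zero_zero θ
  exact ⟨⟨hΨ₃.toHomeomorph.trans (.setCongr hrange), fun _ ↦ rfl⟩, hrange ▸ hΨ₃.isClosed_range⟩

/-- The map `Ψ₃ : ℝ → Γ₃`, `Ψ₃(τ) = q((0,0), τ)`, is a homeomorphism onto `Γ₃`, and `Γ₃`
is a closed subset of `Q_θ`. -/
theorem Gamma3_homeo_and_isClosed (θ : ℝ) (hθ : Irrational θ) :
    (∃ Ψ₃ : ℝ ≃ₜ (Gamma3 θ), ∀ τ : ℝ, (Ψ₃ τ : Qspace θ) = qmap θ ((0, 0), τ)) ∧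
    IsClosed (Gamma3 θ) :=
  Gamma3_homeo_and_isClosed_general θ
end

section
/- Let (z₁, z₂), (w₁, w₂) ∈ ℂ² and τ, σ ∈ ℝ, and set P := q((z₁, z₂), τ) and P' := q((w₁, w₂), σ) in Q_θ. Then the following are equivalent: (i) f(P) = f(P') for every bounded continuous function f : Q_θ → ℝ; (ii) |z₁| = |w₁| and |z₂| = |w₂|; (iii) P and P' do not have disjoint neighborhoods in Q_θ. -/
open Filter Topology

/-!
The moduli map `P ↦ (|z₁|, |z₂|)` is continuous into the Hausdorff space `ℝ²`, so points with
different moduli are separated by open sets and by bounded continuous functions. Conversely, if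
the moduli agree, replace each zero coordinate by a small `ε ≠ 0`: the perturbed points have both
coordinates nonzero, where `∼` forgets the arguments and the real parameter, so they coincide in
`Q_θ`, while converging to `P` and to `P'` as `ε → 0`. Hence `P` and `P'` cannot be separated.
-/

section Separation

variable {X Y : Type*} [TopologicalSpace X] {f : X → Y} {x y : X}

theorem Continuous.eq_of_not_disjoint_nhds [TopologicalSpace Y] [T2Space Y] (hf : Continuous f)
    (h : ¬Disjoint (𝓝 x) (𝓝 y)) : f x = f y := by
  by_contra hne
  exact h ((hf.tendsto x).disjoint (disjoint_nhds_nhds.2 hne) (hf.tendsto y))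

theorem Continuous.eq_of_forall_bounded_continuous_eq [MetricSpace Y] (hf : Continuous f)
    (h : ∀ g : X → ℝ, Continuous g → (∃ C : ℝ, ∀ P, |g P| ≤ C) → g x = g y) : f x = f y := by
  set g : X → ℝ := fun P => min (dist (f P) (f y)) 1
  have hg_bdd : ∀ P, |g P| ≤ 1 := fun P => by
    rw [abs_of_nonneg (le_min dist_nonneg zero_le_one)]
    exact min_le_right _ _
  have hgx : g x = 0 := by
    simpa [g] using h g ((hf.dist continuous_const).min continuous_const) ⟨1, hg_bdd⟩
  by_contra hne
  exact (lt_min (dist_pos.2 hne) one_pos).ne' hgx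

end Separation

theorem mrel_of_ne_zero (θ : ℝ) {p q : (ℂ × ℂ) × ℝ} (hp₁ : p.1.1 ≠ 0) (hp₂ : p.1.2 ≠ 0)
    (h₁ : ‖p.1.1‖ = ‖q.1.1‖) (h₂ : ‖p.1.2‖ = ‖q.1.2‖) : mrel θ p q :=
  ⟨h₁, h₂, fun h => absurd h.2 hp₂, fun h => absurd h.1 hp₁, fun h => absurd h.1 hp₁⟩

noncomputable def moduli (θ : ℝ) : Qspace θ → ℝ × ℝ :=
  Quotient.lift (fun p => (‖p.1.1‖, ‖p.1.2‖)) (fun _ _ h => Prod.ext h.1 h.2.1)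

theorem continuous_moduli (θ : ℝ) : Continuous (moduli θ) :=
  Continuous.quotient_lift (by fun_prop) _

theorem continuous_qmap (θ : ℝ) : Continuous (qmap θ) := continuous_quotient_mk'

noncomputable def fillZero (a : ℂ) (ε : ℝ) : ℂ := if a = 0 then ε else a

theorem fillZero_ne_zero (a : ℂ) {ε : ℝ} (hε : ε ≠ 0) : fillZero a ε ≠ 0 := by
  unfold fillZero
  split_ifs with ha
  · exact_mod_cast hε
  · exact ha

theorem norm_fillZero_eq {a b : ℂ} (h : ‖a‖ = ‖b‖) (ε : ℝ) :
    ‖fillZero a ε‖ = ‖fillZero b ε‖ := by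
  have hab : a = 0 ↔ b = 0 := by rw [← norm_eq_zero, h, norm_eq_zero]
  by_cases ha : a = 0
  · simp [fillZero, ha, hab.1 ha]
  · simp [fillZero, ha, mt hab.2 ha, h]

theorem tendsto_fillZero (a : ℂ) : Tendsto (fillZero a) (𝓝[≠] 0) (𝓝 a) := by
  unfold fillZero
  by_cases ha : a = 0
  · simp only [ha, if_true]
    exact (Complex.continuous_ofReal.tendsto' 0 0 Complex.ofReal_zero).mono_left nhdsWithin_le_nhds
  · simp only [ha, if_false]
    exact tendsto_const_nhds

theorem not_disjoint_nhds_qmap (θ : ℝ) {z w : ℂ × ℂ} (τ σ : ℝ)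
    (h₁ : ‖z.1‖ = ‖w.1‖) (h₂ : ‖z.2‖ = ‖w.2‖) :
    ¬Disjoint (𝓝 (qmap θ (z, τ))) (𝓝 (qmap θ (w, σ))) := by
  set perturb : ℂ × ℂ → ℝ → ℂ × ℂ := fun v ε => (fillZero v.1 ε, fillZero v.2 ε)
  have tendsto_perturb : ∀ (v : ℂ × ℂ) (t : ℝ),
      Tendsto (fun ε => qmap θ (perturb v ε, t)) (𝓝[≠] 0) (𝓝 (qmap θ (v, t))) := fun v t =>
    ((continuous_qmap θ).tendsto _).comp
      (((tendsto_fillZero v.1).prodMk_nhds (tendsto_fillZero v.2)).prodMk_nhds tendsto_const_nhds)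
  have perturb_eq : ∀ ε ∈ ({0}ᶜ : Set ℝ),
      qmap θ (perturb w ε, σ) = qmap θ (perturb z ε, τ) := fun ε hε =>
    Quotient.sound <| mrel_of_ne_zero θ (fillZero_ne_zero _ hε) (fillZero_ne_zero _ hε)
      (norm_fillZero_eq h₁.symm ε) (norm_fillZero_eq h₂.symm ε)
  exact fun hdisj => (tendsto_perturb z τ).not_tendsto hdisj <|
    (tendsto_perturb w σ).congr' (eventually_nhdsWithin_of_forall perturb_eq)

theorem glimm_equivalences_general (θ : ℝ)
    (z w : ℂ × ℂ) (τ σ : ℝ) :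
    ((∀ f : Qspace θ → ℝ, Continuous f → (∃ C : ℝ, ∀ P, |f P| ≤ C) →
        f (qmap θ (z, τ)) = f (qmap θ (w, σ))) ↔
      (‖z.1‖ = ‖w.1‖ ∧ ‖z.2‖ = ‖w.2‖)) ∧
    ((‖z.1‖ = ‖w.1‖ ∧ ‖z.2‖ = ‖w.2‖) ↔
      ¬ ∃ U ∈ 𝓝 (qmap θ (z, τ)), ∃ V ∈ 𝓝 (qmap θ (w, σ)), Disjoint U V) := by
  have hmoduli : (‖z.1‖ = ‖w.1‖ ∧ ‖z.2‖ = ‖w.2‖) ↔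
      moduli θ (qmap θ (z, τ)) = moduli θ (qmap θ (w, σ)) := Prod.mk_inj.symm
  rw [← Filter.disjoint_iff]
  refine ⟨⟨fun h => hmoduli.2 ((continuous_moduli θ).eq_of_forall_bounded_continuous_eq h),
    fun h f hf _ => hf.eq_of_not_disjoint_nhds (not_disjoint_nhds_qmap θ τ σ h.1 h.2)⟩,
    ⟨fun h => not_disjoint_nhds_qmap θ τ σ h.1 h.2,
    fun h => hmoduli.2 ((continuous_moduli θ).eq_of_not_disjoint_nhds h)⟩⟩

/-- For `P = q((z₁,z₂), τ)` and `P' = q((w₁,w₂), σ)` in `Q_θ`, the following are equivalent: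
(i) `f(P) = f(P')` for every bounded continuous `f : Q_θ → ℝ`;
(ii) `|z₁| = |w₁|` and `|z₂| = |w₂|`;
(iii) `P` and `P'` do not have disjoint neighbourhoods in `Q_θ`. -/
theorem glimm_equivalences (θ : ℝ) (hθ : Irrational θ)
    (z w : ℂ × ℂ) (τ σ : ℝ) :
    ((∀ f : Qspace θ → ℝ, Continuous f → (∃ C : ℝ, ∀ P, |f P| ≤ C) →
        f (qmap θ (z, τ)) = f (qmap θ (w, σ))) ↔
      (‖z.1‖ = ‖w.1‖ ∧ ‖z.2‖ = ‖w.2‖)) ∧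
    ((‖z.1‖ = ‖w.1‖ ∧ ‖z.2‖ = ‖w.2‖) ↔
      ¬ ∃ U ∈ 𝓝 (qmap θ (z, τ)), ∃ V ∈ 𝓝 (qmap θ (w, σ)), Disjoint U V) :=
  glimm_equivalences_general θ z w τ σ
end
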